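/- arXiv:1605.03282 — 5 statements merged into one kernel-verified Lean document; each statement's English description precedes it below -/
import Mathlib

section
/- For all constants c > 0, w > 0, λ > 0 and ν > 0, the sequence n ↦ (n^ν / w) · (∑_{k ∈ ℕ, k > 2 c w n^λ} e^{-c w n^λ} (c w n^λ)^k / k!) tends to 0 as n → ∞. -/
open Real Filter

lemma aux_pow_div_factorial_le_exp {x : ℝ} (hx : 0 ≤ x) (k : ℕ) :
    x ^ k / k.factorial ≤ Real.exp x := by
  calc x ^ k / k.factorial
      ≤ ∑ i ∈ Finset.range (k + 1), x ^ i / i.factorial := by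
        refine Finset.single_le_sum (f := fun i => x ^ i / (i.factorial : ℝ)) ?_ ?_
        · intro i _
          positivity
        · simp
    _ ≤ Real.exp x := Real.sum_le_exp_of_nonneg hx _

lemma aux_term_bound {μ : ℝ} (hμ : 0 ≤ μ) {k : ℕ} (hk : 2 * μ < k) :
    Real.exp (-μ) * μ ^ k / k.factorial ≤
      Real.exp (-((8 / 5 * Real.log 2 - 1) * μ)) * Real.exp (-(Real.log 2 / 5)) ^ k := by
  have h2 : (0:ℝ) < 2 := by norm_num
  have hlog : 0 < Real.log 2 := Real.log_pos (by norm_num)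
  have h1 : μ ^ k / k.factorial ≤ Real.exp (2 * μ) / 2 ^ k := by
    have := aux_pow_div_factorial_le_exp (x := 2 * μ) (by linarith) k
    rw [mul_pow] at this
    rw [div_le_div_iff₀ (by positivity) (by positivity)]
    calc μ ^ k * 2 ^ k = 2 ^ k * μ ^ k := by ring
      _ ≤ Real.exp (2 * μ) * k.factorial := by
          rw [div_le_iff₀ (by positivity)] at this
          linarith
  have hfac : (0:ℝ) < k.factorial := by exact_mod_cast k.factorial_pos
  calc Real.exp (-μ) * μ ^ k / k.factorial
      = Real.exp (-μ) * (μ ^ k / k.factorial) := by ring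
    _ ≤ Real.exp (-μ) * (Real.exp (2 * μ) / 2 ^ k) := by
        exact mul_le_mul_of_nonneg_left h1 (Real.exp_pos _).le
    _ = Real.exp (μ - k * Real.log 2) := by
        have h2k : (2:ℝ) ^ k = Real.exp ((k : ℝ) * Real.log 2) := by
          rw [← Real.exp_log h2, ← Real.exp_nat_mul, Real.exp_log h2]
        rw [h2k, ← Real.exp_sub, ← Real.exp_add]
        ring_nf
    _ ≤ Real.exp (-((8 / 5 * Real.log 2 - 1) * μ) + k * -(Real.log 2 / 5)) := by
        rw [Real.exp_le_exp]
        nlinarith [mul_nonneg hlog.le (by linarith : (0:ℝ) ≤ (k:ℝ) - 2 * μ)]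
    _ = Real.exp (-((8 / 5 * Real.log 2 - 1) * μ)) * Real.exp (-(Real.log 2 / 5)) ^ k := by
        rw [Real.exp_add, ← Real.exp_nat_mul]

/-- For all constants `c, w, λ, ν > 0`, the sequence
`n ↦ (n^ν / w) ∑_{k > 2 c w n^λ} e^{-c w n^λ} (c w n^λ)^k / k!` tends to `0`. -/
theorem tendsto_slab_poisson_tail (c w lam nu : ℝ) (hc : 0 < c) (hw : 0 < w)
    (hlam : 0 < lam) (hnu : 0 < nu) :
    Filter.Tendsto
      (fun n : ℕ =>
        ((n : ℝ) ^ nu / w) *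
          ∑' k : ℕ, if 2 * c * w * (n : ℝ) ^ lam < (k : ℝ) then
            Real.exp (-(c * w * (n : ℝ) ^ lam)) *
              (c * w * (n : ℝ) ^ lam) ^ k / (Nat.factorial k : ℝ) else 0)
      Filter.atTop (nhds 0) := by
  set δ : ℝ := 8 / 5 * Real.log 2 - 1 with hδdef
  have hlog : 0 < Real.log 2 := Real.log_pos (by norm_num)
  have hδ : 0 < δ := by
    have h : Real.log 2 > 0.6931471803 := by
      have := Real.log_two_gt_d9
      linarith
    rw [hδdef]; nlinarith
  set s : ℝ := Real.exp (-(Real.log 2 / 5)) with hsdef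
  have hs0 : 0 ≤ s := (Real.exp_pos _).le
  have hs1 : s < 1 := by
    rw [hsdef]
    calc Real.exp (-(Real.log 2 / 5)) < Real.exp 0 := by
          rw [Real.exp_lt_exp]; linarith
      _ = 1 := Real.exp_zero
  set C : ℝ := (1 - s)⁻¹ with hCdef
  have hC0 : 0 ≤ C := by rw [hCdef]; exact inv_nonneg.mpr (by linarith)
  have hgeo : Summable (fun k : ℕ => s ^ k) := summable_geometric_of_lt_one hs0 hs1
  have hμ : ∀ n : ℕ, 0 ≤ c * w * (n : ℝ) ^ lam := by
    intro n
    have : (0:ℝ) ≤ (n:ℝ) ^ lam := Real.rpow_nonneg (Nat.cast_nonneg n) lam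
    positivity
  -- Bound the tail sum
  have hsum_le : ∀ n : ℕ,
      (∑' k : ℕ, if 2 * c * w * (n : ℝ) ^ lam < (k : ℝ) then
          Real.exp (-(c * w * (n : ℝ) ^ lam)) *
            (c * w * (n : ℝ) ^ lam) ^ k / (Nat.factorial k : ℝ) else 0)
        ≤ Real.exp (-(δ * (c * w * (n : ℝ) ^ lam))) * C := by
    intro n
    set μ : ℝ := c * w * (n : ℝ) ^ lam with hμdef
    have hμ0 : 0 ≤ μ := hμ n
    have hterm : ∀ k : ℕ,
        (if 2 * c * w * (n : ℝ) ^ lam < (k : ℝ) then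
            Real.exp (-μ) * μ ^ k / (Nat.factorial k : ℝ) else 0)
          ≤ Real.exp (-(δ * μ)) * s ^ k := by
      intro k
      split_ifs with h
      · have h2 : 2 * μ < k := by rw [hμdef]; linarith [h]
        have := aux_term_bound hμ0 h2
        simpa [hsdef, hδdef] using this
      · exact mul_nonneg (Real.exp_pos _).le (pow_nonneg hs0 k)
    have hub : Summable (fun k : ℕ => Real.exp (-(δ * μ)) * s ^ k) := hgeo.mul_left _
    have hlsum : Summable (fun k : ℕ =>
        if 2 * c * w * (n : ℝ) ^ lam < (k : ℝ) then
          Real.exp (-μ) * μ ^ k / (Nat.factorial k : ℝ) else 0) := by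
      apply Summable.of_nonneg_of_le _ hterm hub
      intro k
      split_ifs
      · positivity
      · exact le_rfl
    calc (∑' k : ℕ, if 2 * c * w * (n : ℝ) ^ lam < (k : ℝ) then
            Real.exp (-μ) * μ ^ k / (Nat.factorial k : ℝ) else 0)
        ≤ ∑' k : ℕ, Real.exp (-(δ * μ)) * s ^ k := Summable.tsum_le_tsum hterm hlsum hub
      _ = Real.exp (-(δ * μ)) * ∑' k : ℕ, s ^ k := tsum_mul_left
      _ = Real.exp (-(δ * μ)) * C := by rw [tsum_geometric_of_lt_one hs0 hs1, hCdef]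
  -- squeeze
  have hnonneg : ∀ n : ℕ, 0 ≤ ((n : ℝ) ^ nu / w) *
      ∑' k : ℕ, if 2 * c * w * (n : ℝ) ^ lam < (k : ℝ) then
        Real.exp (-(c * w * (n : ℝ) ^ lam)) *
          (c * w * (n : ℝ) ^ lam) ^ k / (Nat.factorial k : ℝ) else 0 := by
    intro n
    apply mul_nonneg
    · have : (0:ℝ) ≤ (n:ℝ) ^ nu := Real.rpow_nonneg (Nat.cast_nonneg n) nu
      positivity
    · apply tsum_nonneg
      intro k
      split_ifs
      · positivity
      · exact le_rfl
  have hupper : ∀ n : ℕ, ((n : ℝ) ^ nu / w) *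
      (∑' k : ℕ, if 2 * c * w * (n : ℝ) ^ lam < (k : ℝ) then
        Real.exp (-(c * w * (n : ℝ) ^ lam)) *
          (c * w * (n : ℝ) ^ lam) ^ k / (Nat.factorial k : ℝ) else 0)
      ≤ ((n : ℝ) ^ nu / w) * (Real.exp (-(δ * (c * w * (n : ℝ) ^ lam))) * C) := by
    intro n
    apply mul_le_mul_of_nonneg_left (hsum_le n)
    have : (0:ℝ) ≤ (n:ℝ) ^ nu := Real.rpow_nonneg (Nat.cast_nonneg n) nu
    positivity
  -- the upper bound tends to 0
  have hup : Tendsto (fun n : ℕ => ((n : ℝ) ^ nu / w) *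
      (Real.exp (-(δ * (c * w * (n : ℝ) ^ lam))) * C)) atTop (nhds 0) := by
    have hb : 0 < δ * (c * w) := by positivity
    have h0 : Tendsto (fun x : ℝ => x ^ (nu / lam) * Real.exp (-(δ * (c * w)) * x))
        atTop (nhds 0) := tendsto_rpow_mul_exp_neg_mul_atTop_nhds_zero _ _ hb
    have hcomp : Tendsto (fun n : ℕ => (n : ℝ) ^ lam) atTop atTop :=
      (tendsto_rpow_atTop hlam).comp tendsto_natCast_atTop_atTop
    have h1 : Tendsto (fun n : ℕ =>
        ((n : ℝ) ^ lam) ^ (nu / lam) * Real.exp (-(δ * (c * w)) * ((n : ℝ) ^ lam)))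
        atTop (nhds 0) := h0.comp hcomp
    have heq : ∀ n : ℕ,
        ((n : ℝ) ^ lam) ^ (nu / lam) * Real.exp (-(δ * (c * w)) * ((n : ℝ) ^ lam))
          = (n : ℝ) ^ nu * Real.exp (-(δ * (c * w * (n : ℝ) ^ lam))) := by
      intro n
      rw [← Real.rpow_mul (Nat.cast_nonneg n)]
      rw [show lam * (nu / lam) = nu from by field_simp]
      ring_nf
    have h2 : Tendsto (fun n : ℕ =>
        (n : ℝ) ^ nu * Real.exp (-(δ * (c * w * (n : ℝ) ^ lam)))) atTop (nhds 0) := by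
      refine h1.congr (fun n => ?_)
      exact heq n
    have h3 := h2.mul_const (C / w)
    rw [zero_mul] at h3
    refine h3.congr (fun n => ?_)
    ring
  exact squeeze_zero hnonneg hupper hup
end

section
/- Let 0 < γ < 1. There exists a constant C > 0, depending only on γ, such that for every integer s ≥ 1, ∑_{(j,k) ∈ ℤ²} γ^{√(s² + j² + k²)} ≤ C s² γ^s. -/
set_option maxHeartbeats 1600000

open Real

/-- Geometric tail sum over ℕ with truncated subtraction in the exponent. -/
lemma nat_trunc_geom_sum {r : ℝ} (hr0 : 0 < r) (hr1 : r < 1) (t : ℕ) :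
    Summable (fun m : ℕ => r ^ (m - t)) ∧
      ∑' m : ℕ, r ^ (m - t) ≤ (t : ℝ) + (1 - r)⁻¹ := by
  have hgeom : Summable (fun n : ℕ => r ^ n) :=
    summable_geometric_of_lt_one hr0.le hr1
  have hshift : (fun n : ℕ => r ^ ((n + t) - t)) = fun n : ℕ => r ^ n := by
    funext n; simp
  have hsum : Summable (fun m : ℕ => r ^ (m - t)) := by
    rw [← summable_nat_add_iff t, hshift]; exact hgeom
  refine ⟨hsum, ?_⟩
  have h := (Summable.sum_add_tsum_nat_add (f := fun m : ℕ => r ^ (m - t)) t hsum).symm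
  rw [h]
  have h1 : (∑ i ∈ Finset.range t, r ^ (i - t)) ≤ (t : ℝ) := by
    calc (∑ i ∈ Finset.range t, r ^ (i - t)) ≤ ∑ i ∈ Finset.range t, 1 := by
          apply Finset.sum_le_sum
          intro i _
          exact pow_le_one₀ hr0.le hr1.le
      _ = (t : ℝ) := by simp
  have h2 : (∑' n : ℕ, r ^ ((n + t) - t)) = (1 - r)⁻¹ := by
    rw [hshift]; exact tsum_geometric_of_lt_one hr0.le hr1
  rw [h2]; linarith

lemma max3_ineq (s a b : ℝ) :
    s + max (a - s) 0 / 2 + max (b - s) 0 / 2 ≤ max s (max a b) := by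
  have h1 : a ≤ max s (max a b) := le_trans (le_max_left a b) (le_max_right _ _)
  have h2 : b ≤ max s (max a b) := le_trans (le_max_right a b) (le_max_right _ _)
  have h3 : s ≤ max s (max a b) := le_max_left _ _
  rcases le_total a s with ha | ha <;> rcases le_total b s with hb | hb
  · rw [max_eq_right (sub_nonpos.mpr ha), max_eq_right (sub_nonpos.mpr hb)]; linarith
  · rw [max_eq_right (sub_nonpos.mpr ha), max_eq_left (sub_nonneg.mpr hb)]; linarith
  · rw [max_eq_left (sub_nonneg.mpr ha), max_eq_right (sub_nonpos.mpr hb)]; linarith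
  · rw [max_eq_left (sub_nonneg.mpr ha), max_eq_left (sub_nonneg.mpr hb)]; linarith

lemma max3_le_sqrt (s a b : ℝ) (hs : 0 ≤ s) (ha : 0 ≤ a) (hb : 0 ≤ b) :
    max s (max a b) ≤ Real.sqrt (s ^ 2 + a ^ 2 + b ^ 2) := by
  have key : ∀ x : ℝ, 0 ≤ x → x ^ 2 ≤ s ^ 2 + a ^ 2 + b ^ 2 →
      x ≤ Real.sqrt (s ^ 2 + a ^ 2 + b ^ 2) := by
    intro x hx hle
    have h := Real.sqrt_le_sqrt hle
    rwa [Real.sqrt_sq hx] at h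
  rcases max_cases s (max a b) with ⟨h, _⟩ | ⟨h, _⟩
  · rw [h]; exact key s hs (by nlinarith)
  · rw [h]
    rcases max_cases a b with ⟨h', _⟩ | ⟨h', _⟩
    · rw [h']; exact key a ha (by nlinarith)
    · rw [h']; exact key b hb (by nlinarith)

/-- Truncated subtraction cast equals max. -/
lemma cast_nat_sub (m t : ℕ) : ((m - t : ℕ) : ℝ) = max ((m : ℝ) - t) 0 := by
  rcases le_total m t with h | h
  · rw [Nat.sub_eq_zero_of_le h, max_eq_right (by simp; exact_mod_cast h)]; simp
  · rw [Nat.cast_sub h, max_eq_left (by simp; exact_mod_cast h)]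

/-- Planar lattice slab bound for the exponential decay model: for `0 < γ < 1` there
is a constant `C > 0` such that for every integer `s ≥ 1`,
`∑_{(j,k) ∈ ℤ²} γ^{√(s² + j² + k²)} ≤ C s² γ^s`. -/
theorem slab_sum_exponential (γ : ℝ) (hγ0 : 0 < γ) (hγ1 : γ < 1) :
    ∃ C > 0, ∀ s : ℤ, 1 ≤ s →
      (∑' p : ℤ × ℤ,
          γ ^ Real.sqrt ((s : ℝ) ^ 2 + (p.1 : ℝ) ^ 2 + (p.2 : ℝ) ^ 2))
        ≤ C * (s : ℝ) ^ 2 * γ ^ (s : ℝ) := by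
  obtain ⟨r, hr_def⟩ : ∃ r : ℝ, r = γ ^ (2⁻¹ : ℝ) := ⟨_, rfl⟩
  have hr0 : 0 < r := by rw [hr_def]; exact Real.rpow_pos_of_pos hγ0 _
  have hr1 : r < 1 := by
    rw [hr_def]
    calc γ ^ (2⁻¹ : ℝ) < 1 ^ (2⁻¹ : ℝ) :=
          Real.rpow_lt_rpow hγ0.le hγ1 (by norm_num)
      _ = 1 := Real.one_rpow _
  -- C₀ bounds the one-dimensional sum divided by s
  obtain ⟨C₀, hC₀_def⟩ : ∃ C₀ : ℝ, C₀ = 2 + 2 * (1 - r)⁻¹ := ⟨_, rfl⟩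
  have hC₀pos : 0 < C₀ := by
    have : 0 < (1 - r)⁻¹ := inv_pos.mpr (by linarith)
    rw [hC₀_def]; positivity
  refine ⟨C₀ ^ 2, by positivity, ?_⟩
  intro s hs
  obtain ⟨t, ht_def⟩ : ∃ t : ℕ, t = s.toNat := ⟨_, rfl⟩
  have hts : (t : ℝ) = (s : ℝ) := by
    rw [ht_def]
    exact_mod_cast congrArg (Int.cast : ℤ → ℝ)
      (Int.toNat_of_nonneg (by linarith : (0:ℤ) ≤ s))
  have hs1 : (1 : ℝ) ≤ (s : ℝ) := by exact_mod_cast hs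
  -- one-dimensional function
  obtain ⟨g, hg_def⟩ : ∃ g : ℤ → ℝ, g = fun n : ℤ => r ^ (n.natAbs - t) := ⟨_, rfl⟩
  have hgpos : ∀ n, 0 ≤ g n := fun n => by rw [hg_def]; exact (pow_pos hr0 _).le
  -- summability and bound of ∑ g over ℤ
  obtain ⟨hnat, hnat_bd⟩ := nat_trunc_geom_sum hr0 hr1 t
  have habs1 : ∀ n : ℕ, ((n : ℤ)).natAbs = n := fun n => by omega
  have habs2 : ∀ n : ℕ, ((-(n : ℤ))).natAbs = n := fun n => by omega
  have habs3 : ∀ n : ℕ, ((-(↑n + 1) : ℤ)).natAbs = n + 1 := fun n => by omega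
  have hg_nat : Summable (fun n : ℕ => g n) := by
    have : (fun n : ℕ => g n) = fun n : ℕ => r ^ (n - t) := by
      funext n; rw [hg_def]; simp only [habs1]
    rw [this]; exact hnat
  have hg_neg : Summable (fun n : ℕ => g (-(n : ℤ))) := by
    have : (fun n : ℕ => g (-(n : ℤ))) = fun n : ℕ => r ^ (n - t) := by
      funext n; rw [hg_def]; simp only [habs2]
    rw [this]; exact hnat
  have hg_shift_eq : (fun n : ℕ => g (-(↑n + 1))) = fun n : ℕ => r ^ ((n + 1) - t) := by
    funext n; rw [hg_def]; simp only [habs3]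
  have hg_sum : Summable g := Summable.of_nat_of_neg hg_nat hg_neg
  have hg_bd : ∑' n : ℤ, g n ≤ C₀ * (s : ℝ) := by
    have hshift_sum : Summable (fun n : ℕ => g (-(↑n + 1))) := by
      rw [hg_shift_eq]; exact (summable_nat_add_iff 1).mpr hnat
    have key : ∑' n : ℤ, g n = (∑' n : ℕ, g n) + ∑' n : ℕ, g (-(↑n + 1)) :=
      tsum_of_nat_of_neg_add_one hg_nat hshift_sum
    have b1 : (∑' n : ℕ, g n) ≤ (t : ℝ) + (1 - r)⁻¹ := by
      have : (fun n : ℕ => g n) = fun n : ℕ => r ^ (n - t) := by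
        funext n; rw [hg_def]; simp only [habs1]
      rw [this]; exact hnat_bd
    have b2 : (∑' n : ℕ, g (-(↑n + 1))) ≤ (t : ℝ) + (1 - r)⁻¹ := by
      rw [hg_shift_eq]
      have : ∑' n : ℕ, r ^ ((n + 1) - t) ≤ ∑' m : ℕ, r ^ (m - t) := by
        have h := (Summable.sum_add_tsum_nat_add (f := fun m : ℕ => r ^ (m - t)) 1 hnat).symm
        rw [h]
        have : 0 ≤ ∑ i ∈ Finset.range 1, r ^ (i - t) := by positivity
        linarith
      linarith
    have ht_le : (t : ℝ) ≤ (s : ℝ) := le_of_eq hts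
    have hinv : 0 < (1 - r)⁻¹ := inv_pos.mpr (by linarith)
    calc ∑' n : ℤ, g n ≤ 2 * ((t : ℝ) + (1 - r)⁻¹) := by rw [key]; linarith
      _ ≤ 2 * ((s : ℝ) + (1 - r)⁻¹ * (s : ℝ)) := by nlinarith
      _ = C₀ * (s : ℝ) := by rw [hC₀_def]; ring
  -- pointwise bound
  have hpt : ∀ p : ℤ × ℤ,
      γ ^ Real.sqrt ((s : ℝ) ^ 2 + (p.1 : ℝ) ^ 2 + (p.2 : ℝ) ^ 2)
        ≤ γ ^ (s : ℝ) * (g p.1 * g p.2) := by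
    rintro ⟨j, k⟩
    have habsj : |(j : ℝ)| = ((j.natAbs : ℕ) : ℝ) := by
      rw [Nat.cast_natAbs]; exact Int.cast_abs.symm
    have habsk : |(k : ℝ)| = ((k.natAbs : ℕ) : ℝ) := by
      rw [Nat.cast_natAbs]; exact Int.cast_abs.symm
    -- exponent inequality
    have hexp : (s : ℝ) + ((j.natAbs - t : ℕ) : ℝ) * (2⁻¹ : ℝ)
        + ((k.natAbs - t : ℕ) : ℝ) * (2⁻¹ : ℝ)
        ≤ Real.sqrt ((s : ℝ) ^ 2 + (j : ℝ) ^ 2 + (k : ℝ) ^ 2) := by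
      have e1 : ((j.natAbs - t : ℕ) : ℝ) = max (|(j : ℝ)| - (s : ℝ)) 0 := by
        rw [cast_nat_sub, habsj, hts]
      have e2 : ((k.natAbs - t : ℕ) : ℝ) = max (|(k : ℝ)| - (s : ℝ)) 0 := by
        rw [cast_nat_sub, habsk, hts]
      rw [e1, e2]
      have h1 := max3_ineq (s : ℝ) |(j : ℝ)| |(k : ℝ)|
      have h2 := max3_le_sqrt (s : ℝ) |(j : ℝ)| |(k : ℝ)| (by linarith)
        (abs_nonneg _) (abs_nonneg _)
      have hjj : |(j : ℝ)| ^ 2 = (j : ℝ) ^ 2 := sq_abs _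
      have hkk : |(k : ℝ)| ^ 2 = (k : ℝ) ^ 2 := sq_abs _
      rw [hjj, hkk] at h2
      calc (s : ℝ) + max (|(j : ℝ)| - (s : ℝ)) 0 * (2⁻¹ : ℝ)
            + max (|(k : ℝ)| - (s : ℝ)) 0 * (2⁻¹ : ℝ)
          = (s : ℝ) + max (|(j : ℝ)| - (s : ℝ)) 0 / 2
            + max (|(k : ℝ)| - (s : ℝ)) 0 / 2 := by ring
        _ ≤ max (s : ℝ) (max |(j : ℝ)| |(k : ℝ)|) := h1
        _ ≤ _ := h2
    have hmono := Real.rpow_le_rpow_of_exponent_ge hγ0 hγ1.le hexp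
    refine le_trans hmono (le_of_eq ?_)
    have hg_eq : ∀ n : ℤ, g n = γ ^ (((n.natAbs - t : ℕ) : ℝ) * (2⁻¹ : ℝ)) := by
      intro n
      rw [hg_def]
      show r ^ (n.natAbs - t) = _
      rw [← Real.rpow_natCast r, hr_def, ← Real.rpow_mul hγ0.le]
      congr 1; ring
    rw [hg_eq j, hg_eq k, ← Real.rpow_add hγ0, ← Real.rpow_add hγ0]
    congr 1; ring
  -- summability of the majorant
  have hmaj : Summable (fun p : ℤ × ℤ => γ ^ (s : ℝ) * (g p.1 * g p.2)) :=
    (Summable.mul_of_nonneg hg_sum hg_sum hgpos hgpos).mul_left _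
  have hlhs : Summable (fun p : ℤ × ℤ =>
      γ ^ Real.sqrt ((s : ℝ) ^ 2 + (p.1 : ℝ) ^ 2 + (p.2 : ℝ) ^ 2)) :=
    Summable.of_nonneg_of_le (fun p => (Real.rpow_pos_of_pos hγ0 _).le) hpt hmaj
  calc (∑' p : ℤ × ℤ, γ ^ Real.sqrt ((s : ℝ) ^ 2 + (p.1 : ℝ) ^ 2 + (p.2 : ℝ) ^ 2))
      ≤ ∑' p : ℤ × ℤ, γ ^ (s : ℝ) * (g p.1 * g p.2) :=
        Summable.tsum_le_tsum hpt hlhs hmaj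
    _ = γ ^ (s : ℝ) * ∑' p : ℤ × ℤ, g p.1 * g p.2 := tsum_mul_left
    _ = γ ^ (s : ℝ) * ((∑' n : ℤ, g n) * ∑' n : ℤ, g n) := by
        congr 1
        rw [Summable.tsum_prod' (Summable.mul_of_nonneg hg_sum hg_sum hgpos hgpos)
          (fun b => by simpa using hg_sum.mul_left (g b))]
        simp_rw [tsum_mul_left]
        rw [tsum_mul_right]
    _ ≤ γ ^ (s : ℝ) * (C₀ * (s : ℝ) * (C₀ * (s : ℝ))) := by
        have hnn : 0 ≤ ∑' n : ℤ, g n := tsum_nonneg hgpos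
        have hγs : 0 < γ ^ (s : ℝ) := Real.rpow_pos_of_pos hγ0 _
        apply mul_le_mul_of_nonneg_left _ hγs.le
        nlinarith
    _ = C₀ ^ 2 * (s : ℝ) ^ 2 * γ ^ (s : ℝ) := by ring
end

section
/- Let 0 < γ < 1. There exists a constant C > 0, depending only on γ, such that for all positive integers N₁, N₂, N₃: ∑_{i_l=1}^{N₁} ∑_{i_r=1}^{N₁} ∑_{j_l=1}^{N₂} ∑_{j_r=1}^{N₂} ∑_{k_l=1}^{N₃} ∑_{k_r=1}^{N₃} γ^{√((i_l+i_r-1)² + (j_l-j_r)² + (k_l-k_r)²)} ≤ C N₂ N₃. -/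
/-- Any finite sum of powers of `β ∈ [0,1)` over distinct exponents is at most `(1-β)⁻¹`. -/
lemma finset_geom_le {β : ℝ} (h0 : 0 ≤ β) (h1 : β < 1) (t : Finset ℕ) :
    ∑ m ∈ t, β ^ m ≤ (1 - β)⁻¹ := by
  have := Summable.sum_le_tsum (f := fun m => β ^ m) t
    (fun i _ => pow_nonneg h0 i) (summable_geometric_of_lt_one h0 h1)
  rwa [tsum_geometric_of_lt_one h0 h1] at this

lemma inj_geom_le {β : ℝ} (h0 : 0 ≤ β) (h1 : β < 1) (s : Finset ℕ) (f : ℕ → ℕ)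
    (hf : Set.InjOn f s) : ∑ x ∈ s, β ^ (f x) ≤ (1 - β)⁻¹ := by
  rw [← Finset.sum_image (f := fun m : ℕ => β ^ m) (g := f)
    (fun a ha b hb h => hf ha hb h)]
  exact finset_geom_le h0 h1 _

/-- For a fixed `jl`, the sum of `β^{dist jl jr}` over `jr ∈ [1,N]` is at most `2(1-β)⁻¹`. -/
lemma dist_sum_le {β : ℝ} (h0 : 0 ≤ β) (h1 : β < 1) (N jl : ℕ) :
    ∑ jr ∈ Finset.Icc 1 N, β ^ (Nat.dist jl jr) ≤ 2 * (1 - β)⁻¹ := by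
  have hsplit := Finset.sum_filter_add_sum_filter_not (Finset.Icc 1 N)
    (fun jr => jr ≤ jl) (fun jr => β ^ (Nat.dist jl jr))
  rw [← hsplit]
  have hA : ∑ jr ∈ (Finset.Icc 1 N).filter (fun jr => jr ≤ jl), β ^ (Nat.dist jl jr)
      ≤ (1 - β)⁻¹ := by
    apply inj_geom_le h0 h1
    intro a ha b hb h
    simp only [Finset.coe_filter, Set.mem_setOf_eq, Finset.mem_Icc] at ha hb
    simp only [Nat.dist] at h
    omega
  have hB : ∑ jr ∈ (Finset.Icc 1 N).filter (fun jr => ¬ jr ≤ jl), β ^ (Nat.dist jl jr)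
      ≤ (1 - β)⁻¹ := by
    apply inj_geom_le h0 h1
    intro a ha b hb h
    simp only [Finset.coe_filter, Set.mem_setOf_eq, Finset.mem_Icc] at ha hb
    simp only [Nat.dist] at h
    omega
  linarith

/-- Cast of `Nat.dist` to the reals is the absolute difference. -/
lemma cast_nat_dist (a b : ℕ) : ((Nat.dist a b : ℕ) : ℝ) = |(a : ℝ) - (b : ℝ)| := by
  rcases le_total a b with h | h
  · rw [Nat.dist_eq_sub_of_le h, Nat.cast_sub h, abs_sub_comm,
      abs_of_nonneg (sub_nonneg.2 ((Nat.cast_le (α := ℝ)).2 h))]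
  · rw [Nat.dist_eq_sub_of_le_right h, Nat.cast_sub h,
      abs_of_nonneg (sub_nonneg.2 ((Nat.cast_le (α := ℝ)).2 h))]

/-- Cut-set bound for the exponential decay model: for `0 < γ < 1` there is a
constant `C > 0` such that for all positive integers `N₁, N₂, N₃`, the six-fold sum
of `γ^{√((i_l+i_r-1)² + (j_l-j_r)² + (k_l-k_r)²)}` over all index tuples is at most
`C N₂ N₃`. -/
theorem cutset_sum_exponential (γ : ℝ) (hγ0 : 0 < γ) (hγ1 : γ < 1) :
    ∃ C > 0, ∀ N₁ N₂ N₃ : ℕ, 0 < N₁ → 0 < N₂ → 0 < N₃ →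
      (∑ il ∈ Finset.Icc 1 N₁, ∑ ir ∈ Finset.Icc 1 N₁,
        ∑ jl ∈ Finset.Icc 1 N₂, ∑ jr ∈ Finset.Icc 1 N₂,
          ∑ kl ∈ Finset.Icc 1 N₃, ∑ kr ∈ Finset.Icc 1 N₃,
            γ ^ Real.sqrt (((il : ℝ) + (ir : ℝ) - 1) ^ 2 +
              ((jl : ℝ) - (jr : ℝ)) ^ 2 + ((kl : ℝ) - (kr : ℝ)) ^ 2))
        ≤ C * (N₂ : ℝ) * (N₃ : ℝ) := by
  set β : ℝ := γ ^ (2⁻¹ : ℝ) with hβdef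
  have hβ0 : 0 < β := Real.rpow_pos_of_pos hγ0 _
  have hβ1 : β < 1 := Real.rpow_lt_one hγ0.le hγ1 (by norm_num)
  set c : ℝ := (1 - β)⁻¹ with hcdef
  have hc0 : 0 < c := inv_pos.2 (by linarith)
  refine ⟨(c * c) * ((2 * c) * (2 * c)), by positivity, ?_⟩
  intro N₁ N₂ N₃ hN₁ hN₂ hN₃
  -- pointwise bound
  have key : ∀ il ∈ Finset.Icc 1 N₁, ∀ ir ∈ Finset.Icc 1 N₁,
      ∀ jl ∈ Finset.Icc 1 N₂, ∀ jr ∈ Finset.Icc 1 N₂,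
      ∀ kl ∈ Finset.Icc 1 N₃, ∀ kr ∈ Finset.Icc 1 N₃,
      γ ^ Real.sqrt (((il : ℝ) + (ir : ℝ) - 1) ^ 2 +
          ((jl : ℝ) - (jr : ℝ)) ^ 2 + ((kl : ℝ) - (kr : ℝ)) ^ 2)
        ≤ β ^ (il + ir - 1) * β ^ (Nat.dist jl jr) * β ^ (Nat.dist kl kr) := by
    intro il hil ir hir jl hjl jr hjr kl hkl kr hkr
    simp only [Finset.mem_Icc] at hil hir hjl hjr hkl hkr
    set n : ℕ := (il + ir - 1) + Nat.dist jl jr + Nat.dist kl kr with hn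
    have hcast : ((n : ℕ) : ℝ) =
        ((il : ℝ) + (ir : ℝ) - 1) + |(jl : ℝ) - (jr : ℝ)| + |(kl : ℝ) - (kr : ℝ)| := by
      rw [hn]
      push_cast [cast_nat_dist, Nat.cast_sub (by omega : 1 ≤ il + ir)]
      ring
    have hA1 : (1 : ℝ) ≤ (il : ℝ) + (ir : ℝ) - 1 := by
      have h1 : (1 : ℝ) ≤ (il : ℝ) := by exact_mod_cast hil.1
      have h2 : (1 : ℝ) ≤ (ir : ℝ) := by exact_mod_cast hir.1
      linarith
    have hsqrt : (n : ℝ) / 2 ≤ Real.sqrt (((il : ℝ) + (ir : ℝ) - 1) ^ 2 +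
        ((jl : ℝ) - (jr : ℝ)) ^ 2 + ((kl : ℝ) - (kr : ℝ)) ^ 2) := by
      rw [Real.le_sqrt (by positivity) (by positivity)]
      rw [hcast]
      have hb := abs_nonneg ((jl : ℝ) - (jr : ℝ))
      have hk := abs_nonneg ((kl : ℝ) - (kr : ℝ))
      have hb2 := sq_abs ((jl : ℝ) - (jr : ℝ))
      have hk2 := sq_abs ((kl : ℝ) - (kr : ℝ))
      nlinarith [sq_nonneg (((il : ℝ) + (ir : ℝ) - 1) - |(jl : ℝ) - (jr : ℝ)|),
        sq_nonneg (((il : ℝ) + (ir : ℝ) - 1) - |(kl : ℝ) - (kr : ℝ)|),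
        sq_nonneg (|(jl : ℝ) - (jr : ℝ)| - |(kl : ℝ) - (kr : ℝ)|)]
    have h2 : γ ^ Real.sqrt (((il : ℝ) + (ir : ℝ) - 1) ^ 2 +
        ((jl : ℝ) - (jr : ℝ)) ^ 2 + ((kl : ℝ) - (kr : ℝ)) ^ 2) ≤ γ ^ ((n : ℝ) / 2) :=
      Real.rpow_le_rpow_of_exponent_ge hγ0 hγ1.le hsqrt
    have h3 : γ ^ ((n : ℝ) / 2) = β ^ n := by
      have : ((n : ℝ) / 2) = 2⁻¹ * (n : ℝ) := by ring
      rw [this, Real.rpow_mul hγ0.le, hβdef, Real.rpow_natCast]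
    calc γ ^ Real.sqrt _ ≤ γ ^ ((n : ℝ) / 2) := h2
      _ = β ^ n := h3
      _ = β ^ (il + ir - 1) * β ^ (Nat.dist jl jr) * β ^ (Nat.dist kl kr) := by
          rw [hn, pow_add, pow_add]
  -- the three factor sums
  have hSA : ∑ il ∈ Finset.Icc 1 N₁, ∑ ir ∈ Finset.Icc 1 N₁, β ^ (il + ir - 1) ≤ c * c := by
    have step : ∀ il ∈ Finset.Icc 1 N₁, ∀ ir ∈ Finset.Icc 1 N₁,
        β ^ (il + ir - 1) ≤ β ^ (il - 1) * β ^ (ir - 1) := by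
      intro il hil ir hir
      simp only [Finset.mem_Icc] at hil hir
      rw [← pow_add]
      exact pow_le_pow_of_le_one hβ0.le hβ1.le (by omega)
    calc ∑ il ∈ Finset.Icc 1 N₁, ∑ ir ∈ Finset.Icc 1 N₁, β ^ (il + ir - 1)
        ≤ ∑ il ∈ Finset.Icc 1 N₁, ∑ ir ∈ Finset.Icc 1 N₁, β ^ (il - 1) * β ^ (ir - 1) := by
          apply Finset.sum_le_sum; intro il hil
          apply Finset.sum_le_sum; intro ir hir
          exact step il hil ir hir
      _ = (∑ il ∈ Finset.Icc 1 N₁, β ^ (il - 1)) * (∑ ir ∈ Finset.Icc 1 N₁, β ^ (ir - 1)) := by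
          rw [Finset.sum_mul_sum]
      _ ≤ c * c := by
          have h : ∑ il ∈ Finset.Icc 1 N₁, β ^ (il - 1) ≤ c := by
            apply inj_geom_le hβ0.le hβ1
            intro a ha b hb h
            simp only [Finset.coe_Icc, Set.mem_Icc] at ha hb
            simp only at h
            omega
          have hnn : (0 : ℝ) ≤ ∑ il ∈ Finset.Icc 1 N₁, β ^ (il - 1) :=
            Finset.sum_nonneg fun i _ => pow_nonneg hβ0.le _
          exact mul_le_mul h h hnn hc0.le
  have hSB : ∀ N : ℕ, ∑ jl ∈ Finset.Icc 1 N, ∑ jr ∈ Finset.Icc 1 N, β ^ (Nat.dist jl jr)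
      ≤ (2 * c) * N := by
    intro N
    calc ∑ jl ∈ Finset.Icc 1 N, ∑ jr ∈ Finset.Icc 1 N, β ^ (Nat.dist jl jr)
        ≤ ∑ _jl ∈ Finset.Icc 1 N, 2 * c :=
          Finset.sum_le_sum fun jl _ => dist_sum_le hβ0.le hβ1 N jl
      _ = (2 * c) * N := by
          rw [Finset.sum_const, Nat.card_Icc]
          simp [nsmul_eq_mul]
          ring
  -- combine
  calc (∑ il ∈ Finset.Icc 1 N₁, ∑ ir ∈ Finset.Icc 1 N₁,
        ∑ jl ∈ Finset.Icc 1 N₂, ∑ jr ∈ Finset.Icc 1 N₂,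
          ∑ kl ∈ Finset.Icc 1 N₃, ∑ kr ∈ Finset.Icc 1 N₃,
            γ ^ Real.sqrt (((il : ℝ) + (ir : ℝ) - 1) ^ 2 +
              ((jl : ℝ) - (jr : ℝ)) ^ 2 + ((kl : ℝ) - (kr : ℝ)) ^ 2))
      ≤ ∑ il ∈ Finset.Icc 1 N₁, ∑ ir ∈ Finset.Icc 1 N₁,
        ∑ jl ∈ Finset.Icc 1 N₂, ∑ jr ∈ Finset.Icc 1 N₂,
          ∑ kl ∈ Finset.Icc 1 N₃, ∑ kr ∈ Finset.Icc 1 N₃,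
            β ^ (il + ir - 1) * β ^ (Nat.dist jl jr) * β ^ (Nat.dist kl kr) := by
        apply Finset.sum_le_sum; intro il hil
        apply Finset.sum_le_sum; intro ir hir
        apply Finset.sum_le_sum; intro jl hjl
        apply Finset.sum_le_sum; intro jr hjr
        apply Finset.sum_le_sum; intro kl hkl
        apply Finset.sum_le_sum; intro kr hkr
        exact key il hil ir hir jl hjl jr hjr kl hkl kr hkr
    _ = (∑ il ∈ Finset.Icc 1 N₁, ∑ ir ∈ Finset.Icc 1 N₁, β ^ (il + ir - 1)) *
        ((∑ jl ∈ Finset.Icc 1 N₂, ∑ jr ∈ Finset.Icc 1 N₂, β ^ (Nat.dist jl jr)) *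
         (∑ kl ∈ Finset.Icc 1 N₃, ∑ kr ∈ Finset.Icc 1 N₃, β ^ (Nat.dist kl kr))) := by
        simp only [← Finset.mul_sum, ← Finset.sum_mul]
        ring
    _ ≤ (c * c) * (((2 * c) * N₂) * ((2 * c) * N₃)) := by
        have hBnn : (0 : ℝ) ≤ ∑ jl ∈ Finset.Icc 1 N₂, ∑ jr ∈ Finset.Icc 1 N₂,
            β ^ (Nat.dist jl jr) :=
          Finset.sum_nonneg fun _ _ => Finset.sum_nonneg fun _ _ => pow_nonneg hβ0.le _
        have hCnn : (0 : ℝ) ≤ ∑ kl ∈ Finset.Icc 1 N₃, ∑ kr ∈ Finset.Icc 1 N₃,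
            β ^ (Nat.dist kl kr) :=
          Finset.sum_nonneg fun _ _ => Finset.sum_nonneg fun _ _ => pow_nonneg hβ0.le _
        have hAnn : (0 : ℝ) ≤ ∑ il ∈ Finset.Icc 1 N₁, ∑ ir ∈ Finset.Icc 1 N₁,
            β ^ (il + ir - 1) :=
          Finset.sum_nonneg fun _ _ => Finset.sum_nonneg fun _ _ => pow_nonneg hβ0.le _
        have h2 := hSB N₂
        have h3 := hSB N₃
        have hmul : (∑ jl ∈ Finset.Icc 1 N₂, ∑ jr ∈ Finset.Icc 1 N₂, β ^ (Nat.dist jl jr)) *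
            (∑ kl ∈ Finset.Icc 1 N₃, ∑ kr ∈ Finset.Icc 1 N₃, β ^ (Nat.dist kl kr))
            ≤ ((2 * c) * N₂) * ((2 * c) * N₃) :=
          mul_le_mul h2 h3 hCnn (by positivity)
        exact mul_le_mul hSA hmul (by positivity) (by positivity)
    _ = (c * c) * ((2 * c) * (2 * c)) * (N₂ : ℝ) * (N₃ : ℝ) := by ring
end

section
/- Let α > 4. There exists a constant C > 0, depending only on α, such that for all positive integers N₁, N₂, N₃: ∑_{i_l=1}^{N₁} ∑_{i_r=1}^{N₁} ∑_{j_l=1}^{N₂} ∑_{j_r=1}^{N₂} ∑_{k_l=1}^{N₃} ∑_{k_r=1}^{N₃} ((i_l+i_r-1)² + (j_l-j_r)² + (k_l-k_r)²)^{-α/2} ≤ C N₂ N₃. -/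
/-!
With `a = i_l + i_r - 1 ≥ 1`, the squared distance `x = a² + b² + c²` dominates each of `a²`,
`1 + b²` and `1 + c²`, so splitting the exponent as `α/2 = α/4 + α/8 + α/8` gives
`x^{-α/2} ≤ (a²)^{-α/4} (1 + b²)^{-α/8} (1 + c²)^{-α/8}` and the six-fold sum factors.
For fixed `j_l` the differences `j_l - j_r` are distinct integers, so the `j`-double sum is at most
`N₂ ∑_{d ∈ ℤ} (1 + d²)^{-α/8}`, finite because `α/4 > 1`; likewise for `k`.
Finally `i_l i_r ≤ a²` bounds the `i`-double sum by `(∑ n^{-α/4})²`, finite for the same reason.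
-/

open Finset Real Filter

lemma rpow_neg_add_add_le {u v w γ : ℝ} (hu : 1 ≤ u) (hv : 0 ≤ v) (hw : 0 ≤ w) (hγ : 0 ≤ γ) :
    (u + v + w) ^ (-γ) ≤ u ^ (-(γ / 2)) * ((1 + v) ^ (-(γ / 4)) * (1 + w) ^ (-(γ / 4))) := by
  have hx : 0 < u + v + w := by linarith
  have hsplit : (u + v + w) ^ (-γ) =
      (u + v + w) ^ (-(γ / 2)) * ((u + v + w) ^ (-(γ / 4)) * (u + v + w) ^ (-(γ / 4))) := by
    rw [← rpow_add hx, ← rpow_add hx]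
    ring_nf
  rw [hsplit]
  gcongr ?_ * (?_ * ?_) <;> exact rpow_le_rpow_of_nonpos (by linarith) (by linarith) (by linarith)

lemma summable_one_add_sq_rpow_neg {p : ℝ} (hp : 1 / 2 < p) :
    Summable fun d : ℤ => (1 + (d : ℝ) ^ 2) ^ (-p) := by
  refine (summable_abs_int_rpow (b := 2 * p) (by linarith)).of_norm_bounded_eventually ?_
  filter_upwards [eventually_cofinite_ne 0] with d hd
  have hd2 : 0 < (d : ℝ) ^ 2 := by positivity
  calc ‖(1 + (d : ℝ) ^ 2) ^ (-p)‖ = (1 + (d : ℝ) ^ 2) ^ (-p) := norm_of_nonneg (by positivity)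
    _ ≤ ((d : ℝ) ^ 2) ^ (-p) := rpow_le_rpow_of_nonpos hd2 (by linarith) (by linarith)
    _ = |(d : ℝ)| ^ (-(2 * p)) := by
      rw [← sq_abs, ← rpow_natCast, ← rpow_mul (abs_nonneg _)]
      ring_nf

lemma sum_sum_comp_sub_le_card_mul_tsum {f : ℤ → ℝ} (hf0 : ∀ d, 0 ≤ f d) (hf : Summable f)
    (s : Finset ℕ) : ∑ j ∈ s, ∑ j' ∈ s, f (j - j') ≤ #s * ∑' d, f d := by
  have hrow (j : ℕ) : ∑ j' ∈ s, f (j - j') ≤ ∑' d, f d := by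
    rw [← sum_image (g := fun j' : ℕ => (j : ℤ) - j') (by intro _ _ _ _ h; simpa using h)]
    exact hf.sum_le_tsum _ fun d _ => hf0 d
  simpa using sum_le_sum fun j (_ : j ∈ s) => hrow j

lemma sum_sum_one_add_sq_sub_rpow_neg_le {p : ℝ} (hp : 1 / 2 < p) (N : ℕ) :
    ∑ j ∈ Icc 1 N, ∑ j' ∈ Icc 1 N, (1 + ((j : ℝ) - j') ^ 2) ^ (-p)
      ≤ (N : ℝ) * ∑' d : ℤ, (1 + (d : ℝ) ^ 2) ^ (-p) := by
  simpa using sum_sum_comp_sub_le_card_mul_tsum (fun d => by positivity)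
    (summable_one_add_sq_rpow_neg hp) (Icc 1 N)

lemma sum_sum_sq_add_sub_one_rpow_neg_le {p : ℝ} (hp : 1 < p) (N : ℕ) :
    ∑ i ∈ Icc 1 N, ∑ i' ∈ Icc 1 N, (((i : ℝ) + i' - 1) ^ 2) ^ (-p)
      ≤ (∑' n : ℕ, (n : ℝ) ^ (-p)) ^ 2 := by
  have hsum : Summable fun n : ℕ => (n : ℝ) ^ (-p) := summable_nat_rpow.mpr (by linarith)
  have hpoint : ∀ i ∈ Icc 1 N, ∀ i' ∈ Icc 1 N,
      (((i : ℝ) + i' - 1) ^ 2) ^ (-p) ≤ (i : ℝ) ^ (-p) * (i' : ℝ) ^ (-p) := by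
    intro i hi i' hi'
    have h1 : (1 : ℝ) ≤ i := by exact_mod_cast (mem_Icc.mp hi).1
    have h1' : (1 : ℝ) ≤ i' := by exact_mod_cast (mem_Icc.mp hi').1
    rw [← mul_rpow (by positivity) (by positivity)]
    exact rpow_le_rpow_of_nonpos (by positivity) (by nlinarith) (by linarith)
  calc ∑ i ∈ Icc 1 N, ∑ i' ∈ Icc 1 N, (((i : ℝ) + i' - 1) ^ 2) ^ (-p)
      ≤ ∑ i ∈ Icc 1 N, ∑ i' ∈ Icc 1 N, (i : ℝ) ^ (-p) * (i' : ℝ) ^ (-p) :=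
        sum_le_sum fun i hi => sum_le_sum fun i' hi' => hpoint i hi i' hi'
    _ = (∑ i ∈ Icc 1 N, (i : ℝ) ^ (-p)) ^ 2 := by rw [sq, sum_mul_sum]
    _ ≤ (∑' n : ℕ, (n : ℝ) ^ (-p)) ^ 2 := by
      gcongr
      exact hsum.sum_le_tsum _ fun n _ => by positivity

/-- Cut-set bound for the polynomial decay model: for `α > 4` there is a constant
`C > 0` such that for all positive integers `N₁, N₂, N₃`, the six-fold sum of
`((i_l+i_r-1)² + (j_l-j_r)² + (k_l-k_r)²)^{-α/2}` over all index tuples is at most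
`C N₂ N₃`. -/
theorem cutset_sum_polynomial (α : ℝ) (hα : 4 < α) :
    ∃ C > 0, ∀ N₁ N₂ N₃ : ℕ, 0 < N₁ → 0 < N₂ → 0 < N₃ →
      (∑ il ∈ Finset.Icc 1 N₁, ∑ ir ∈ Finset.Icc 1 N₁,
        ∑ jl ∈ Finset.Icc 1 N₂, ∑ jr ∈ Finset.Icc 1 N₂,
          ∑ kl ∈ Finset.Icc 1 N₃, ∑ kr ∈ Finset.Icc 1 N₃,
            (((il : ℝ) + (ir : ℝ) - 1) ^ 2 + ((jl : ℝ) - (jr : ℝ)) ^ 2 +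
              ((kl : ℝ) - (kr : ℝ)) ^ 2) ^ (-(α / 2)))
        ≤ C * (N₂ : ℝ) * (N₃ : ℝ) := by
  have hsum : Summable fun n : ℕ => (n : ℝ) ^ (-(α / 2 / 2)) := summable_nat_rpow.mpr (by linarith)
  refine ⟨(∑' n : ℕ, (n : ℝ) ^ (-(α / 2 / 2))) ^ 2 * (∑' d : ℤ, (1 + (d : ℝ) ^ 2) ^ (-(α / 2 / 4))) ^ 2,
    ?_, ?_⟩
  · have := hsum.tsum_pos (fun n => by positivity) 1 (by norm_num)
    have := (summable_one_add_sq_rpow_neg (p := α / 2 / 4) (by linarith)).tsum_pos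
      (fun d => by positivity) 0 (by norm_num)
    positivity
  intro N₁ N₂ N₃ _ _ _
  calc _ ≤ ∑ il ∈ Icc 1 N₁, ∑ ir ∈ Icc 1 N₁, ∑ jl ∈ Icc 1 N₂, ∑ jr ∈ Icc 1 N₂,
        ∑ kl ∈ Icc 1 N₃, ∑ kr ∈ Icc 1 N₃, (((il : ℝ) + ir - 1) ^ 2) ^ (-(α / 2 / 2)) *
          ((1 + ((jl : ℝ) - jr) ^ 2) ^ (-(α / 2 / 4)) *
            (1 + ((kl : ℝ) - kr) ^ 2) ^ (-(α / 2 / 4))) := by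
        gcongr with il hil ir hir
        have : (1 : ℝ) ≤ il := by exact_mod_cast (mem_Icc.mp hil).1
        have : (1 : ℝ) ≤ ir := by exact_mod_cast (mem_Icc.mp hir).1
        exact rpow_neg_add_add_le (by nlinarith) (sq_nonneg _) (sq_nonneg _) (by linarith)
    _ = (∑ il ∈ Icc 1 N₁, ∑ ir ∈ Icc 1 N₁, (((il : ℝ) + ir - 1) ^ 2) ^ (-(α / 2 / 2))) *
          ((∑ jl ∈ Icc 1 N₂, ∑ jr ∈ Icc 1 N₂, (1 + ((jl : ℝ) - jr) ^ 2) ^ (-(α / 2 / 4))) *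
            (∑ kl ∈ Icc 1 N₃, ∑ kr ∈ Icc 1 N₃, (1 + ((kl : ℝ) - kr) ^ 2) ^ (-(α / 2 / 4)))) := by
        simp only [← mul_sum, ← sum_mul]
    _ ≤ (∑' n : ℕ, (n : ℝ) ^ (-(α / 2 / 2))) ^ 2 *
          ((N₂ * ∑' d : ℤ, (1 + (d : ℝ) ^ 2) ^ (-(α / 2 / 4))) *
            (N₃ * ∑' d : ℤ, (1 + (d : ℝ) ^ 2) ^ (-(α / 2 / 4)))) := by
        gcongr ?_ * (?_ * ?_)
        · exact sum_sum_sq_add_sub_one_rpow_neg_le (by linarith) N₁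
        · exact sum_sum_one_add_sq_sub_rpow_neg_le (by linarith) N₂
        · exact sum_sum_one_add_sq_sub_rpow_neg_le (by linarith) N₃
    _ = _ := by ring
end

section
/- The sequence n ↦ n · (∑_{k ∈ ℕ, log n < k ≤ n} C(n,k) (1/n)^k (1 - 1/n)^{n-k}) tends to 0 as n → ∞, where C(n,k) is the binomial coefficient and logarithms are natural. In particular, if a region containing n uniformly placed nodes is divided into n cells so that the number of nodes in a fixed cell is Binomial(n, 1/n), then by the union bound the probability that some cell contains more than log n nodes tends to 0. -/
open Filter Real Finset
open scoped Nat

private lemma aux_m_tendsto :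
    Tendsto (fun n : ℕ => ⌊Real.log n⌋₊ + 1) atTop atTop :=
  (tendsto_add_atTop_nat 1).comp
    (tendsto_nat_floor_atTop.comp
      (Real.tendsto_log_atTop.comp tendsto_natCast_atTop_atTop))

/-- Binomial binning bound (Lemma 8): the sequence
`n ↦ n ∑_{log n < k ≤ n} C(n,k) (1/n)^k (1 - 1/n)^{n-k}` tends to `0` as `n → ∞`. -/
theorem tendsto_binomial_union_bound :
    Filter.Tendsto
      (fun n : ℕ =>
        (n : ℝ) *
          ∑ k ∈ Finset.range (n + 1),
            if Real.log n < (k : ℝ) then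
              (n.choose k : ℝ) * (1 / (n : ℝ)) ^ k * (1 - 1 / (n : ℝ)) ^ (n - k)
            else 0)
      Filter.atTop (nhds 0) := by
  set m : ℕ → ℕ := fun n => ⌊Real.log n⌋₊ + 1 with hm
  have hg : Tendsto (fun n : ℕ => 2 * ((Real.exp 2) ^ (m n) / (m n)!)) atTop (nhds 0) := by
    have := ((FloorSemiring.tendsto_pow_div_factorial_atTop (Real.exp 2)).comp
      aux_m_tendsto).const_mul (2 : ℝ)
    simpa using this
  apply squeeze_zero' (g := fun n => 2 * ((Real.exp 2) ^ (m n) / (m n)!)) _ _ hg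
  · filter_upwards [eventually_ge_atTop 1] with n hn
    have h1 : (1 : ℝ) ≤ (n : ℝ) := by exact_mod_cast hn
    have hnn : (0 : ℝ) < n := by linarith
    apply mul_nonneg (by positivity)
    apply Finset.sum_nonneg
    intro k _
    split
    · have h1n : (0 : ℝ) ≤ 1 - 1 / n := by
        rw [sub_nonneg, div_le_one hnn]; exact h1
      exact mul_nonneg (mul_nonneg (by positivity) (by positivity)) (pow_nonneg h1n _)
    · exact le_refl 0
  · filter_upwards [eventually_ge_atTop 1] with n hn
    have h1 : (1 : ℝ) ≤ (n : ℝ) := by exact_mod_cast hn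
    have hnn : (0 : ℝ) < n := by linarith
    -- each term of the sum is at most 1/(m n)!
    have hterm : ∀ k ∈ Finset.range (n + 1),
        (if Real.log n < (k : ℝ) then
          (n.choose k : ℝ) * (1 / (n : ℝ)) ^ k * (1 - 1 / (n : ℝ)) ^ (n - k)
        else 0) ≤ 1 / (m n)! := by
      intro k _
      have hfac_pos : (0 : ℝ) < (m n)! := by exact_mod_cast (m n).factorial_pos
      split
      · rename_i hk
        -- k ≥ m n
        have hkm : m n ≤ k := by
          have hfl : ⌊Real.log n⌋₊ < k := (Nat.floor_lt (Real.log_nonneg h1)).mpr hk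
          simp only [hm]; omega
        have hfacle : ((m n)! : ℝ) ≤ (k ! : ℝ) := by
          exact_mod_cast Nat.factorial_le hkm
        have hchoose : (n.choose k : ℝ) * (1 / (n : ℝ)) ^ k ≤ 1 / k ! := by
          have h := Nat.choose_le_pow_div (α := ℝ) k n
          have h2 : (n.choose k : ℝ) * (1 / (n : ℝ)) ^ k ≤ ((n : ℝ) ^ k / k !) * (1 / (n : ℝ)) ^ k :=
            mul_le_mul_of_nonneg_right h (by positivity)
          have heq : ((n : ℝ) ^ k / k !) * (1 / (n : ℝ)) ^ k = 1 / k ! := by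
            rw [div_pow, one_pow]; field_simp
          linarith
        have hbase : (0 : ℝ) ≤ 1 - 1 / n := by
          rw [sub_nonneg, div_le_one hnn]; exact h1
        have hbase1 : (1 : ℝ) - 1 / n ≤ 1 := by
          have : (0:ℝ) ≤ 1 / n := by positivity
          linarith
        calc (n.choose k : ℝ) * (1 / (n : ℝ)) ^ k * (1 - 1 / (n : ℝ)) ^ (n - k)
            ≤ (n.choose k : ℝ) * (1 / (n : ℝ)) ^ k * 1 := by
              apply mul_le_mul_of_nonneg_left (pow_le_one₀ hbase hbase1) (by positivity)
          _ = (n.choose k : ℝ) * (1 / (n : ℝ)) ^ k := by ring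
          _ ≤ 1 / k ! := hchoose
          _ ≤ 1 / (m n)! := by
              apply one_div_le_one_div_of_le hfac_pos hfacle
      · positivity
    have hsum : (∑ k ∈ Finset.range (n + 1),
        if Real.log n < (k : ℝ) then
          (n.choose k : ℝ) * (1 / (n : ℝ)) ^ k * (1 - 1 / (n : ℝ)) ^ (n - k)
        else 0) ≤ (n + 1) * (1 / (m n)!) := by
      calc _ ≤ ∑ _k ∈ Finset.range (n + 1), 1 / ((m n)! : ℝ) := Finset.sum_le_sum hterm
        _ = (n + 1) * (1 / (m n)!) := by
            rw [Finset.sum_const, Finset.card_range]; ring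
    have hfac_pos : (0 : ℝ) < (m n)! := by exact_mod_cast (m n).factorial_pos
    have hstep : (n : ℝ) * ((n + 1) * (1 / (m n)!)) ≤ 2 * ((Real.exp 2) ^ (m n) / (m n)!) := by
      have hkey : (n : ℝ) * (n + 1) ≤ 2 * (Real.exp 2) ^ (m n) := by
        have hlog : Real.log n < (m n : ℝ) := by
          have h := Nat.lt_floor_add_one (Real.log n)
          simp only [hm]; push_cast [hm]; linarith
        have hn_le : (n : ℝ) ≤ Real.exp (m n) := by
          calc (n : ℝ) = Real.exp (Real.log n) := (Real.exp_log hnn).symm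
            _ ≤ Real.exp (m n) := Real.exp_le_exp.mpr hlog.le
        have hexp : Real.exp ((m n : ℝ)) ^ 2 = (Real.exp 2) ^ (m n) := by
          rw [← Real.exp_nat_mul, ← Real.exp_nat_mul]; ring_nf
        have hpos : (0:ℝ) ≤ Real.exp (m n) := (Real.exp_pos _).le
        calc (n : ℝ) * (n + 1) ≤ Real.exp (m n) * (2 * Real.exp (m n)) := by
              apply mul_le_mul hn_le (by linarith) (by linarith) hpos
          _ = 2 * (Real.exp ((m n : ℝ)) ^ 2) := by ring
          _ = 2 * (Real.exp 2) ^ (m n) := by rw [hexp]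
      calc (n : ℝ) * ((n + 1) * (1 / (m n)!)) = ((n:ℝ) * (n+1)) / ((m n)! : ℝ) := by ring
        _ ≤ (2 * (Real.exp 2) ^ (m n)) / ((m n)! : ℝ) := by gcongr
        _ = 2 * ((Real.exp 2) ^ (m n) / (m n)!) := by ring
    calc (n : ℝ) * ∑ k ∈ Finset.range (n + 1),
          (if Real.log n < (k : ℝ) then
            (n.choose k : ℝ) * (1 / (n : ℝ)) ^ k * (1 - 1 / (n : ℝ)) ^ (n - k)
          else 0)
        ≤ (n : ℝ) * ((n + 1) * (1 / (m n)!)) := by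
          apply mul_le_mul_of_nonneg_left hsum (by positivity)
      _ ≤ 2 * ((Real.exp 2) ^ (m n) / (m n)!) := hstep
end
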